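/- Let X be a finite set, let C be a partition of X, and let T₁ and T₂ be partitions of X with the same shape. Then the uniform average of the mutual information I(C′, T₁) over C′ ∈ perm(C) equals the uniform average of I(C′, T₂) over C′ ∈ perm(C); that is, the one-sided expected mutual information under the permutation model depends on the fixed partition only through its shape. -/
import Mathlib


open Finset Real

variable {X : Type*} [Fintype X] [DecidableEq X]

/-- A finite family of finsets of `X` is a partition of `X` if its blocks are
nonempty, pairwise disjoint, and cover `X`. -/
def IsPartition (P : Finset (Finset X)) : Prop :=
  (∀ B ∈ P, B.Nonempty) ∧
  (∀ B ∈ P, ∀ D ∈ P, B ≠ D → Disjoint B D) ∧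
  (∀ x : X, ∃ B ∈ P, x ∈ B)

instance : DecidablePred (IsPartition (X := X)) := fun _ => by
  unfold IsPartition; infer_instance

/-- The shape of a partition: the multiset of its block sizes. -/
def shape (P : Finset (Finset X)) : Multiset ℕ := P.val.map Finset.card

/-- The image `σ·P` of a partition under a permutation `σ` of `X`. -/
def pmap (σ : X ≃ X) (P : Finset (Finset X)) : Finset (Finset X) :=
  P.image (fun B => B.image σ)

/-- Entropy of a partition: `H(C) = -∑_{B ∈ C} (|B|/N) log (|B|/N)`. -/
noncomputable def entropy (C : Finset (Finset X)) : ℝ :=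
  -∑ B ∈ C, ((B.card : ℝ) / (Fintype.card X : ℝ)) *
    Real.log ((B.card : ℝ) / (Fintype.card X : ℝ))

/-- Mutual information of two partitions:
`I(C,T) = ∑_{B ∈ C} ∑_{D ∈ T} (|B∩D|/N) log (N |B∩D| / (|B| |D|))`
(summands with `B ∩ D = ∅` vanish since the first factor is `0`). -/
noncomputable def MI (C T : Finset (Finset X)) : ℝ :=
  ∑ B ∈ C, ∑ D ∈ T, (((B ∩ D).card : ℝ) / (Fintype.card X : ℝ)) *
    Real.log ((Fintype.card X : ℝ) * ((B ∩ D).card : ℝ) / ((B.card : ℝ) * (D.card : ℝ)))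

/-- The permutation random model `perm(C)`: all partitions of `X` with the same
shape as `C`. -/
def permModel (C : Finset (Finset X)) : Finset (Finset (Finset X)) :=
  Finset.univ.filter (fun P => IsPartition P ∧ shape P = shape C)

/-- The all-partitions random model `all(X)`: all partitions of `X`. -/
def allModel (X : Type*) [Fintype X] [DecidableEq X] : Finset (Finset (Finset X)) :=
  Finset.univ.filter (fun P => IsPartition P)

/-- Uniform average of `f` over a finite set `s`. -/
noncomputable def avg {α : Type*} (s : Finset α) (f : α → ℝ) : ℝ :=
  (∑ a ∈ s, f a) / s.card


section Aux

lemma pmap_inv (σ : X ≃ X) (P : Finset (Finset X)) : pmap σ.symm (pmap σ P) = P := by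
  unfold pmap
  rw [Finset.image_image]
  have : ∀ B ∈ P, ((fun B => Finset.image (⇑σ.symm) B) ∘ fun B => Finset.image (⇑σ) B) B = B := by
    intro B _
    simp [Finset.image_image]
  rw [Finset.image_congr this]
  simp

lemma shape_pmap (σ : X ≃ X) (P : Finset (Finset X)) : shape (pmap σ P) = shape P := by
  unfold shape pmap
  rw [Finset.image_val_of_injOn (fun B _ D _ h => Finset.image_injective σ.injective h),
    Multiset.map_map]
  exact Multiset.map_congr rfl (fun B _ => Finset.card_image_of_injective B σ.injective)

lemma isPartition_pmap (σ : X ≃ X) {P : Finset (Finset X)} (hP : IsPartition P) :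
    IsPartition (pmap σ P) := by
  obtain ⟨h1, h2, h3⟩ := hP
  refine ⟨?_, ?_, ?_⟩
  · intro B hB
    obtain ⟨A, hA, rfl⟩ := Finset.mem_image.mp hB
    exact (h1 A hA).image σ
  · intro B hB D hD hne
    obtain ⟨A, hA, rfl⟩ := Finset.mem_image.mp hB
    obtain ⟨A', hA', rfl⟩ := Finset.mem_image.mp hD
    have hAA' : A ≠ A' := fun h => hne (by rw [h])
    exact (Finset.disjoint_image σ.injective).mpr (h2 A hA A' hA' hAA')
  · intro x
    obtain ⟨B, hB, hx⟩ := h3 (σ.symm x)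
    exact ⟨B.image σ, Finset.mem_image_of_mem _ hB,
      Finset.mem_image.mpr ⟨σ.symm x, hx, by simp⟩⟩

lemma pmap_mem_permModel (σ : X ≃ X) {C P : Finset (Finset X)} (h : P ∈ permModel C) :
    pmap σ P ∈ permModel C := by
  simp only [permModel, Finset.mem_filter, Finset.mem_univ, true_and] at h ⊢
  exact ⟨isPartition_pmap σ h.1, (shape_pmap σ P).trans h.2⟩

lemma MI_pmap (σ : X ≃ X) (C T : Finset (Finset X)) : MI (pmap σ C) (pmap σ T) = MI C T := by
  unfold MI pmap
  rw [Finset.sum_image (fun B _ D _ h => Finset.image_injective σ.injective h)]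
  refine Finset.sum_congr rfl fun B _ => ?_
  rw [Finset.sum_image (fun B _ D _ h => Finset.image_injective σ.injective h)]
  refine Finset.sum_congr rfl fun D _ => ?_
  rw [← Finset.image_inter B D σ.injective,
    Finset.card_image_of_injective _ σ.injective,
    Finset.card_image_of_injective _ σ.injective,
    Finset.card_image_of_injective _ σ.injective]

lemma block_unique {T : Finset (Finset X)} (hT : IsPartition T) {x : X} {B D : Finset X}
    (hB : B ∈ T) (hD : D ∈ T) (hxB : x ∈ B) (hxD : x ∈ D) : B = D := by
  by_contra h
  exact Finset.disjoint_left.mp (hT.2.1 B hB D hD h) hxB hxD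

lemma exists_bij : ∀ (s t : Finset (Finset X)),
    s.val.map Finset.card = t.val.map Finset.card →
    ∃ e : Finset X → Finset X, Set.BijOn e ↑s ↑t ∧ ∀ B ∈ s, (e B).card = B.card := by
  intro s
  induction s using Finset.strongInduction with
  | _ s ih =>
    intro t h
    rcases s.eq_empty_or_nonempty with rfl | ⟨B, hB⟩
    · have ht : t = ∅ := by
        have h' : t.val.map Finset.card = 0 := by simpa using h.symm
        have := Multiset.map_eq_zero.mp h'
        exact Finset.val_eq_zero.mp this
      subst ht
      exact ⟨id, by simp [Set.BijOn], by simp⟩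
    · have hBv : B ∈ s.val := hB
      have hmem : B.card ∈ t.val.map Finset.card := h ▸ Multiset.mem_map_of_mem _ hBv
      obtain ⟨D, hDv, hDc⟩ := Multiset.mem_map.mp hmem
      have hDt : D ∈ t := hDv
      have hrec : (s.erase B).val.map Finset.card = (t.erase D).val.map Finset.card := by
        have hs : s.val = B ::ₘ (s.erase B).val := by
          rw [Finset.erase_val, Multiset.cons_erase hBv]
        have ht' : t.val = D ::ₘ (t.erase D).val := by
          rw [Finset.erase_val, Multiset.cons_erase hDv]
        rw [hs, ht', Multiset.map_cons, Multiset.map_cons, ← hDc] at h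
        exact (Multiset.cons_inj_right _).mp h
      obtain ⟨e, hbij, hcard⟩ := ih (s.erase B) (Finset.erase_ssubset hB) (t.erase D) hrec
      classical
      refine ⟨fun A => if A = B then D else e A, ⟨?_, ?_, ?_⟩, ?_⟩
      · intro A hA
        simp only [Finset.mem_coe] at hA ⊢
        by_cases hAB : A = B
        · simp [hAB, hDt]
        · have : A ∈ s.erase B := Finset.mem_erase.mpr ⟨hAB, hA⟩
          have := hbij.mapsTo (Finset.mem_coe.mpr this)
          simp only [Finset.mem_coe, Finset.mem_erase] at this
          simp [hAB, this.2]
      · intro A hA A' hA' hAA'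
        simp only [Finset.mem_coe] at hA hA'
        by_cases h1 : A = B <;> by_cases h2 : A' = B
        · rw [h1, h2]
        · exfalso
          have hA'e : A' ∈ s.erase B := Finset.mem_erase.mpr ⟨h2, hA'⟩
          have := hbij.mapsTo (Finset.mem_coe.mpr hA'e)
          simp only [Finset.mem_coe, Finset.mem_erase] at this
          simp only [h1, if_pos rfl, if_neg h2] at hAA'
          exact this.1 hAA'.symm
        · exfalso
          have hAe : A ∈ s.erase B := Finset.mem_erase.mpr ⟨h1, hA⟩
          have := hbij.mapsTo (Finset.mem_coe.mpr hAe)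
          simp only [Finset.mem_coe, Finset.mem_erase] at this
          simp only [h2, if_neg h1, if_pos rfl] at hAA'
          exact this.1 hAA'
        · simp only [if_neg h1, if_neg h2] at hAA'
          exact hbij.injOn (Finset.mem_coe.mpr (Finset.mem_erase.mpr ⟨h1, hA⟩))
            (Finset.mem_coe.mpr (Finset.mem_erase.mpr ⟨h2, hA'⟩)) hAA'
      · intro y hy
        simp only [Finset.mem_coe] at hy
        by_cases hyD : y = D
        · exact ⟨B, Finset.mem_coe.mpr hB, by simp [hyD]⟩
        · have : y ∈ t.erase D := Finset.mem_erase.mpr ⟨hyD, hy⟩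
          obtain ⟨A, hA, hAy⟩ := hbij.surjOn (Finset.mem_coe.mpr this)
          have hAe : A ∈ s.erase B := Finset.mem_coe.mp hA
          have hAB : A ≠ B := (Finset.mem_erase.mp hAe).1
          exact ⟨A, Finset.mem_coe.mpr (Finset.mem_of_mem_erase hAe), by simp [hAB, hAy]⟩
      · intro A hA
        by_cases hAB : A = B
        · subst hAB
          simp [hDc]
        · simp only [if_neg hAB]
          exact hcard A (Finset.mem_erase.mpr ⟨hAB, hA⟩)

lemma exists_pmap_eq {T₁ T₂ : Finset (Finset X)} (h₁ : IsPartition T₁) (h₂ : IsPartition T₂)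
    (hsh : shape T₁ = shape T₂) : ∃ σ : X ≃ X, pmap σ T₁ = T₂ := by
  classical
  obtain ⟨e, hbij, hcard⟩ := exists_bij T₁ T₂ hsh
  have φex : ∀ B : Finset X, ∃ f : X → X,
      B ∈ T₁ → (Set.InjOn f ↑B ∧ ∀ x ∈ B, f x ∈ e B) := by
    intro B
    by_cases hB : B ∈ T₁
    · have hc : B.card = (e B).card := (hcard B hB).symm
      let ψ := Finset.equivOfCardEq hc
      refine ⟨fun x => if hx : x ∈ B then (ψ ⟨x, hx⟩ : X) else x, fun _ => ⟨?_, ?_⟩⟩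
      · intro x hx y hy hxy
        simp only [Finset.mem_coe] at hx hy
        simp only [dif_pos hx, dif_pos hy] at hxy
        have := ψ.injective (Subtype.ext hxy)
        exact congrArg Subtype.val this
      · intro x hx
        simp only [dif_pos hx]
        exact (ψ ⟨x, hx⟩).2
    · exact ⟨id, fun h => absurd h hB⟩
  choose f hf using φex
  obtain ⟨h1, h2, h3⟩ := h₁
  choose blk hblkmem hblkx using h3
  set g : X → X := fun x => f (blk x) x with hg
  have hginj : Function.Injective g := by
    intro x y hxy
    by_cases hbxy : blk x = blk y
    · have hy' : y ∈ blk x := hbxy ▸ hblkx y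
      have hxy' : f (blk x) x = f (blk x) y := by
        rw [hg] at hxy
        simpa [hbxy] using hxy
      exact (hf (blk x) (hblkmem x)).1 (Finset.mem_coe.mpr (hblkx x))
        (Finset.mem_coe.mpr hy') hxy'
    · exfalso
      have hgx : g x ∈ e (blk x) := (hf (blk x) (hblkmem x)).2 x (hblkx x)
      have hgy : g y ∈ e (blk y) := (hf (blk y) (hblkmem y)).2 y (hblkx y)
      have hne : e (blk x) ≠ e (blk y) := fun hcontra =>
        hbxy (hbij.injOn (Finset.mem_coe.mpr (hblkmem x)) (Finset.mem_coe.mpr (hblkmem y)) hcontra)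
      have hmx : e (blk x) ∈ T₂ := Finset.mem_coe.mp (hbij.mapsTo (Finset.mem_coe.mpr (hblkmem x)))
      have hmy : e (blk y) ∈ T₂ := Finset.mem_coe.mp (hbij.mapsTo (Finset.mem_coe.mpr (hblkmem y)))
      exact Finset.disjoint_left.mp (h₂.2.1 _ hmx _ hmy hne) hgx (hxy ▸ hgy)
  have hgbij : Function.Bijective g := Finite.injective_iff_bijective.mp hginj
  refine ⟨Equiv.ofBijective g hgbij, ?_⟩
  have hcoe : ⇑(Equiv.ofBijective g hgbij) = g := rfl
  have himg : ∀ B ∈ T₁, B.image g = e B := by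
    intro B hB
    have hsub : B.image g ⊆ e B := by
      intro y hy
      obtain ⟨x, hx, rfl⟩ := Finset.mem_image.mp hy
      have hbx : blk x = B := block_unique ⟨h1, h2, fun z => ⟨blk z, hblkmem z, hblkx z⟩⟩
        (hblkmem x) hB (hblkx x) hx
      have hthis := (hf (blk x) (hblkmem x)).2 x (hblkx x)
      rw [hbx] at hthis
      have hgx : g x = f B x := by simp only [hg]; rw [hbx]
      rw [hgx]
      exact hthis
    refine Finset.eq_of_subset_of_card_le hsub ?_
    rw [Finset.card_image_of_injective _ hginj, hcard B hB]
  unfold pmap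
  rw [hcoe]
  have : T₁.image (fun B => B.image g) = T₁.image e :=
    Finset.image_congr (fun B hB => himg B hB)
  rw [this]
  apply Finset.coe_injective
  rw [Finset.coe_image]
  exact hbij.image_eq

end Aux

theorem stmt3 (hN : 1 ≤ Fintype.card X)
    (C T₁ T₂ : Finset (Finset X)) (hC : IsPartition C)
    (hT₁ : IsPartition T₁) (hT₂ : IsPartition T₂) (hsh : shape T₁ = shape T₂) :
    avg (permModel C) (fun Cp => MI Cp T₁) = avg (permModel C) (fun Cp => MI Cp T₂) := by
  obtain ⟨σ, hσ⟩ := exists_pmap_eq hT₁ hT₂ hsh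
  unfold avg
  congr 1
  rw [← hσ]
  refine Finset.sum_nbij' (i := fun P => pmap σ P) (j := fun P => pmap σ.symm P)
    (fun P hP => pmap_mem_permModel σ hP) (fun P hP => pmap_mem_permModel σ.symm hP)
    (fun P _ => pmap_inv σ P) (fun P _ => by simpa using pmap_inv σ.symm P)
    (fun P _ => (MI_pmap σ P T₁).symm)
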